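/- arXiv:1012.3836 — 2 statements merged into one kernel-verified Lean document; each statement's English description precedes it below -/
import Mathlib

section
/- Let σ ∈ ℝ, T > 0, and let g be a real-valued integrable function on [a,b] ⊆ [2,∞) with ∫_a^b g(x)² x^{1−2σ} dx < ∞. Then ∫_0^T |∫_a^b g(x) x^{−σ−it} dx|² dt ≤ 2π ∫_a^b g(x)² x^{1−2σ} dx. -/
/-!
Substituting `x = e^u` turns the inner integral into `F(t) = ∫_c^d h(u) e^{-itu} du` with
`h(u) = g(e^u) e^{(1-σ)u}` and `[c, d] = [log a, log b]`, and turns `∫ g(x)² x^{1-2σ} dx` into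
`∫ |h|²`. For each `θ`, the values `F(θ + 2πn/(d-c))` are `d - c` times the Fourier coefficients
of `h(u) e^{-iθu}` on the circle of length `d - c`, so Parseval gives
`∑ₙ |F(θ + 2πn/(d-c))|² = (d - c) ∫ |h|²`. Integrating this over one period in `θ` gives
Plancherel's identity `∫_ℝ |F|² = 2π ∫ |h|²`, and `[0, T]` is part of `ℝ`.
-/

open Complex MeasureTheory Set Real
open scoped ENNReal

theorem lintegral_eq_setLIntegral_tsum_add_int_mul {s : ℝ} (hs : 0 < s) {f : ℝ → ℝ≥0∞}
    (hf : Measurable f) : ∫⁻ x, f x = ∫⁻ θ in Ioc 0 s, ∑' n : ℤ, f (θ + n * s) := by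
  let e : ℤ ≃ AddSubgroup.zmultiples s :=
    .ofBijective (fun n => ⟨n • s, n, rfl⟩)
      ⟨fun m n hmn => (zsmul_left_strictMono hs).injective (congrArg Subtype.val hmn),
        fun ⟨_, n, hn⟩ => ⟨n, Subtype.ext hn⟩⟩
  have hmeas (n : ℤ) : AEMeasurable (fun θ => f (θ + n * s)) (volume.restrict (Ioc 0 s)) :=
    (hf.comp (measurable_add_const _)).aemeasurable
  rw [(isAddFundamentalDomain_Ioc hs 0 volume).lintegral_eq_tsum'' f, zero_add, ← e.tsum_eq,
    lintegral_tsum hmeas]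
  refine tsum_congr fun n => setLIntegral_congr_fun measurableSet_Ioc fun θ _ => ?_
  simp [e, add_comm, zsmul_eq_mul]

noncomputable def fourierIntegralIoc (c d : ℝ) (h : ℝ → ℂ) (t : ℝ) : ℂ :=
  ∫ u in Ioc c d, h u * cexp (-(t * u) * I)

section FourierIntegralIoc

theorem norm_cexp_neg_mul_I (t u : ℝ) : ‖cexp (-(t * u) * I)‖ = 1 := by
  exact_mod_cast norm_exp_ofReal_mul_I (-(t * u))

variable {c d : ℝ} {h : ℝ → ℂ}

theorem continuous_fourierIntegralIoc (hh : IntegrableOn h (Ioc c d)) :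
    Continuous (fourierIntegralIoc c d h) := by
  refine continuous_of_dominated (bound := fun u => ‖h u‖) (fun t => ?_)
    (fun t => ae_of_all _ fun u => ?_) hh.norm (ae_of_all _ fun u => by fun_prop)
  · have hkernel : Continuous fun u : ℝ => cexp (-(t * u) * I) := by fun_prop
    exact hh.1.mul hkernel.aestronglyMeasurable
  · rw [norm_mul, norm_cexp_neg_mul_I, mul_one]

theorem fourierIntegralIoc_add_int_mul (hcd : c < d) (θ : ℝ) (n : ℤ) :
    fourierIntegralIoc c d h (θ + n * (2 * π / (d - c))) =
      (d - c : ℂ) * fourierCoeffOn hcd (fun u => h u * cexp (-(θ * u) * I)) n := by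
  have hL : (d - c : ℂ) ≠ 0 := by exact_mod_cast (sub_pos.mpr hcd).ne'
  rw [fourierCoeffOn_eq_integral, intervalIntegral.integral_of_le hcd.le, real_smul,
    ← mul_assoc, ofReal_div, ofReal_one, ofReal_sub, mul_one_div_cancel hL, one_mul,
    fourierIntegralIoc]
  refine setIntegral_congr_fun measurableSet_Ioc fun u _ => ?_
  rw [fourier_coe_apply, smul_eq_mul, mul_left_comm, mul_assoc, ← Complex.exp_add]
  congr 2
  push_cast
  field_simp
  ring

theorem hasSum_sq_norm_fourierIntegralIoc (hcd : c < d)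
    (hh : MemLp h 2 (volume.restrict (Ioc c d))) (θ : ℝ) :
    HasSum (fun n : ℤ => ‖fourierIntegralIoc c d h (θ + n * (2 * π / (d - c)))‖ ^ 2)
      ((d - c) * ∫ u in Ioc c d, ‖h u‖ ^ 2) := by
  set hθ : ℝ → ℂ := fun u => h u * cexp (-(θ * u) * I)
  have hnorm (u : ℝ) : ‖hθ u‖ = ‖h u‖ := by
    rw [norm_mul, norm_cexp_neg_mul_I, mul_one]
  have hkernel : Continuous fun u : ℝ => cexp (-(θ * u) * I) := by fun_prop
  have hmod : MemLp hθ 2 (volume.restrict (Ioc c d)) :=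
    hh.of_le (hh.1.mul hkernel.aestronglyMeasurable) (ae_of_all _ fun u => (hnorm u).le)
  have hcoeff : (fun n : ℤ => ‖fourierIntegralIoc c d h (θ + n * (2 * π / (d - c)))‖ ^ 2) =
      fun n => (d - c) ^ 2 * ‖fourierCoeffOn hcd hθ n‖ ^ 2 := by
    ext n
    rw [fourierIntegralIoc_add_int_mul hcd, norm_mul, mul_pow, ← ofReal_sub, norm_real,
      Real.norm_eq_abs, sq_abs]
  have htotal : (d - c) * ∫ u in Ioc c d, ‖h u‖ ^ 2 =
      (d - c) ^ 2 * ((d - c)⁻¹ • ∫ u in c..d, ‖hθ u‖ ^ 2) := by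
    simp_rw [intervalIntegral.integral_of_le hcd.le, hnorm, smul_eq_mul]
    field_simp
  rw [hcoeff, htotal]
  exact (hasSum_sq_fourierCoeffOn hcd hmod).mul_left _

theorem lintegral_sq_norm_fourierIntegralIoc (hcd : c < d)
    (hh : MemLp h 2 (volume.restrict (Ioc c d))) :
    ∫⁻ t, ENNReal.ofReal (‖fourierIntegralIoc c d h t‖ ^ 2) =
      ENNReal.ofReal (2 * π * ∫ u in Ioc c d, ‖h u‖ ^ 2) := by
  have hL : 0 < d - c := sub_pos.mpr hcd
  have hs : 0 < 2 * π / (d - c) := by positivity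
  have hF := continuous_fourierIntegralIoc (hh.integrable one_le_two)
  rw [lintegral_eq_setLIntegral_tsum_add_int_mul hs (by fun_prop)]
  have hperiod (θ : ℝ) := hasSum_sq_norm_fourierIntegralIoc hcd hh θ
  simp_rw [← ENNReal.ofReal_tsum_of_nonneg (fun _ => sq_nonneg _) (hperiod _).summable,
    (hperiod _).tsum_eq, setLIntegral_const, Real.volume_Ioc, sub_zero]
  rw [← ENNReal.ofReal_mul (by positivity)]
  congr 1
  field_simp

theorem intervalIntegral_sq_norm_fourierIntegralIoc_le {T : ℝ} (hT : 0 ≤ T)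
    (hh : MemLp h 2 (volume.restrict (Ioc c d))) :
    ∫ t in 0..T, ‖fourierIntegralIoc c d h t‖ ^ 2 ≤
      2 * π * ∫ u in Ioc c d, ‖h u‖ ^ 2 := by
  rcases lt_or_ge c d with hcd | hdc
  · have hF := continuous_fourierIntegralIoc (hh.integrable one_le_two)
    rw [intervalIntegral.integral_of_le hT, integral_eq_lintegral_of_nonneg_ae
      (ae_of_all _ fun _ => sq_nonneg _) (by fun_prop : Continuous _).aestronglyMeasurable]
    refine ENNReal.toReal_le_of_le_ofReal (by positivity) ?_
    exact (setLIntegral_le_lintegral _ _).trans (lintegral_sq_norm_fourierIntegralIoc hcd hh).le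
  · simp [fourierIntegralIoc, Ioc_eq_empty_of_le hdc]

end FourierIntegralIoc

noncomputable def expPullback (σ : ℝ) (g : ℝ → ℂ) (u : ℝ) : ℂ :=
  g (rexp u) * (rexp ((1 - σ) * u) : ℝ)

section ExpSubstitution

variable {a b : ℝ}

theorem integral_Ioc_eq_integral_exp_smul {E : Type*} [NormedAddCommGroup E] [NormedSpace ℝ E]
    (ha : 0 < a) (hb : 0 < b) (f : ℝ → E) :
    ∫ x in Ioc a b, f x = ∫ u in Ioc (Real.log a) (Real.log b), rexp u • f (rexp u) := by
  rw [← Real.exp_log ha, ← Real.exp_log hb, ← Real.image_exp_Ioc,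
    integral_image_eq_integral_abs_deriv_smul measurableSet_Ioc 
      (fun u _ => (Real.hasDerivAt_exp u).hasDerivWithinAt) Real.exp_injective.injOn]
  simp only [Real.abs_exp, Real.log_exp]

theorem integrableOn_Ioc_iff_exp_smul {E : Type*} [NormedAddCommGroup E] [NormedSpace ℝ E]
    (ha : 0 < a) (hb : 0 < b) (f : ℝ → E) :
    IntegrableOn f (Ioc a b) ↔
      IntegrableOn (fun u => rexp u • f (rexp u)) (Ioc (Real.log a) (Real.log b)) := by
  rw [← Real.exp_log ha, ← Real.exp_log hb, ← Real.image_exp_Ioc,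
    integrableOn_image_iff_integrableOn_abs_deriv_smul measurableSet_Ioc 
      (fun u _ => (Real.hasDerivAt_exp u).hasDerivWithinAt) Real.exp_injective.injOn]
  simp only [Real.abs_exp, Real.log_exp]

variable {σ : ℝ} {g : ℝ → ℂ}

theorem integral_mul_cpow_eq_fourierIntegralIoc (ha : 0 < a) (hb : 0 < b) (t : ℝ) :
    ∫ x in Ioc a b, g x * (x : ℂ) ^ (-(σ + t * I) : ℂ) =
      fourierIntegralIoc (Real.log a) (Real.log b) (expPullback σ g) t := by
  rw [integral_Ioc_eq_integral_exp_smul ha hb, fourierIntegralIoc]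
  refine setIntegral_congr_fun measurableSet_Ioc fun u _ => ?_
  have hexp : ((rexp u : ℝ) : ℂ) ≠ 0 := ofReal_ne_zero.2 (Real.exp_pos u).ne'
  rw [cpow_def_of_ne_zero hexp, ← ofReal_log (Real.exp_pos u).le, Real.log_exp, expPullback,
    real_smul, ofReal_exp, ofReal_exp, mul_left_comm, ← Complex.exp_add, mul_assoc,
    ← Complex.exp_add]
  congr 2
  push_cast
  ring

theorem sq_norm_expPullback (u : ℝ) :
    ‖expPullback σ g u‖ ^ 2 = rexp u * (‖g (rexp u)‖ ^ 2 * rexp u ^ (1 - 2 * σ)) := by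
  rw [expPullback, norm_mul, norm_real, Real.norm_of_nonneg (Real.exp_pos _).le,
    Real.rpow_def_of_pos (Real.exp_pos _), Real.log_exp, mul_pow, sq (rexp _), ← Real.exp_add,
    mul_left_comm, ← Real.exp_add]
  congr 2
  ring

theorem integral_sq_norm_mul_rpow_eq (ha : 0 < a) (hb : 0 < b) :
    ∫ x in Ioc a b, ‖g x‖ ^ 2 * x ^ (1 - 2 * σ) =
      ∫ u in Ioc (Real.log a) (Real.log b), ‖expPullback σ g u‖ ^ 2 := by
  simp_rw [integral_Ioc_eq_integral_exp_smul ha hb, sq_norm_expPullback, smul_eq_mul]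

theorem memLp_expPullback (ha : 0 < a) (hb : 0 < b) (hg : IntegrableOn g (Ioc a b))
    (hg2 : IntegrableOn (fun x => ‖g x‖ ^ 2 * x ^ (1 - 2 * σ)) (Ioc a b)) :
    MemLp (expPullback σ g) 2 (volume.restrict (Ioc (Real.log a) (Real.log b))) := by
  have hmeas : AEStronglyMeasurable (expPullback σ g)
      (volume.restrict (Ioc (Real.log a) (Real.log b))) := by
    refine (((integrableOn_Ioc_iff_exp_smul ha hb g).1 hg).1.mul
      (by fun_prop : Continuous fun u => ((rexp (-σ * u) : ℝ) : ℂ)).aestronglyMeasurable).congr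
      (ae_of_all _ fun u => ?_)
    rw [Pi.mul_apply, expPullback, real_smul, mul_comm _ (g _), mul_assoc, ← ofReal_mul,
      ← Real.exp_add]
    congr 3
    ring
  refine (memLp_two_iff_integrable_sq_norm hmeas).2 ?_
  simp_rw [sq_norm_expPullback, ← smul_eq_mul (a := rexp _)]
  exact (integrableOn_Ioc_iff_exp_smul ha hb _).1 hg2

end ExpSubstitution

theorem mean_square_modified_mellin_bound (σ T a b : ℝ) (hT : 0 < T) (ha : 2 ≤ a) (hab : a ≤ b)
    (g : ℝ → ℝ) (hg : IntegrableOn g (Icc a b))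
    (hg2 : IntegrableOn (fun x : ℝ => g x ^ 2 * x ^ (1 - 2 * σ)) (Icc a b)) :
    ∫ t in (0:ℝ)..T, ‖∫ x in Icc a b, (g x : ℂ) * (x : ℂ) ^ (-(σ + t * I) : ℂ)‖ ^ 2
      ≤ 2 * π * ∫ x in Icc a b, g x ^ 2 * x ^ (1 - 2 * σ) := by
  have ha0 : 0 < a := by linarith
  have hb0 : 0 < b := by linarith
  have hsq : (fun x => ‖(g x : ℂ)‖ ^ 2 * x ^ (1 - 2 * σ)) =
      fun x => g x ^ 2 * x ^ (1 - 2 * σ) := by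
    simp only [norm_real, Real.norm_eq_abs, sq_abs]
  have hh := memLp_expPullback (σ := σ) ha0 hb0 (hg.mono_set Ioc_subset_Icc_self).ofReal
    ((hsq ▸ hg2).mono_set Ioc_subset_Icc_self)
  simp_rw [integral_Icc_eq_integral_Ioc, integral_mul_cpow_eq_fourierIntegralIoc ha0 hb0, ← hsq,
    integral_sq_norm_mul_rpow_eq ha0 hb0]
  exact intervalIntegral_sq_norm_fourierIntegralIoc_le hT.le hh
end

section
/- For Re(x) > 0 and any c > 0, e^{−x} = (1/2πi) ∫_{(c)} Γ(w) x^{−w} dw, where ∫_{(c)} denotes integration over the vertical line Re(w) = c. -/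
/-!
For real `r > 0` the substitution `u = r t` gives `∫₀^∞ t^(s-1) e^(-r t) dt = Γ(s) r^(-s)`;
both sides are holomorphic in `x` on the right half-plane, so the identity theorem extends
this to `Re x > 0`. Writing `Γ(s) x^(-s) = Γ(s+2) x^(-s-2) x² / (s (s+1))` and bounding the
first factor by the absolutely convergent real integral shows that `Γ(s) x^(-s)` decays like
`|s|⁻²` on vertical lines, so Mellin inversion applies to `t ↦ e^(-x t)` at `t = 1`.
-/

open Complex MeasureTheory Set Filter Topology

namespace Complex

lemma norm_cpow_mul_cexp_neg_mul {s x : ℂ} {t : ℝ} (ht : 0 < t) :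
    ‖(t : ℂ) ^ (s - 1) * cexp (-(x * t))‖ = t ^ (s.re - 1) * Real.exp (-(x.re * t)) := by
  rw [norm_mul, norm_cpow_eq_rpow_re_of_pos ht, norm_exp]
  simp

lemma mellinConvergent_cexp_neg_mul {s x : ℂ} (hs : 0 < s.re) (hx : 0 < x.re) :
    MellinConvergent (fun t : ℝ => cexp (-(x * t))) s := by
  have hreal : IntegrableOn (fun t : ℝ => t ^ (s.re - 1) * Real.exp (-(x.re * t))) (Ioi 0) := by
    simpa using integrableOn_rpow_mul_exp_neg_mul_rpow (by linarith : -1 < s.re - 1) one_pos hx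
  refine hreal.integrable.mono' (by fun_prop : Measurable _).aestronglyMeasurable ?_
  filter_upwards [ae_restrict_mem measurableSet_Ioi] with t ht
  exact (norm_cpow_mul_cexp_neg_mul ht).le

lemma mellin_cexp_neg_mul_ofReal {s : ℂ} (hs : 0 < s.re) {r : ℝ} (hr : 0 < r) :
    mellin (fun t : ℝ => cexp (-(r * t))) s = Gamma s * (r : ℂ) ^ (-s) := by
  have harg : (r : ℂ).arg ≠ Real.pi := by
    rw [arg_ofReal_of_nonneg hr.le]
    exact Real.pi_ne_zero.symm
  change ∫ t : ℝ in Ioi 0, (t : ℂ) ^ (s - 1) * cexp (-(r * t)) = _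
  rw [integral_cpow_mul_exp_neg_mul_Ioi hs hr, one_div, inv_cpow _ _ harg, cpow_neg, mul_comm]

lemma differentiableAt_mellin_cexp_neg_mul {s x₀ : ℂ} (hs : 0 < s.re) (hx₀ : 0 < x₀.re) :
    DifferentiableAt ℂ (fun x : ℂ => mellin (fun t : ℝ => cexp (-(x * t))) s) x₀ := by
  set ε := x₀.re / 2 with hε_def
  have hε : 0 < ε := by positivity
  have hball : ∀ x ∈ Metric.ball x₀ ε, ε ≤ x.re := by
    intro x hx
    have := (abs_le.mp ((abs_re_le_norm (x - x₀)).trans (mem_ball_iff_norm.mp hx).le)).1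
    simp only [sub_re] at this
    linarith [hε_def]
  have hbound : IntegrableOn (fun t : ℝ => t ^ s.re * Real.exp (-(ε * t))) (Ioi 0) := by
    simpa using integrableOn_rpow_mul_exp_neg_mul_rpow (by linarith : -1 < s.re) one_pos hε
  refine (hasDerivAt_integral_of_dominated_loc_of_deriv_le
    (F := fun x (t : ℝ) => (t : ℂ) ^ (s - 1) * cexp (-(x * t)))
    (F' := fun x (t : ℝ) => (t : ℂ) ^ (s - 1) * (cexp (-(x * t)) * -t))
    (Metric.ball_mem_nhds x₀ hε)
    (.of_forall fun x => (by fun_prop : Measurable _).aestronglyMeasurable)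
    (mellinConvergent_cexp_neg_mul hs hx₀) (by fun_prop : Measurable _).aestronglyMeasurable
    ?_ hbound ?_).2.differentiableAt
  · filter_upwards [ae_restrict_mem measurableSet_Ioi] with t (ht : 0 < t) x hx
    calc ‖(t : ℂ) ^ (s - 1) * (cexp (-(x * t)) * -t)‖
        = t ^ (s.re - 1) * Real.exp (-(x.re * t)) * t := by
          rw [← mul_assoc, norm_mul, norm_cpow_mul_cexp_neg_mul ht, norm_neg, norm_real,
            Real.norm_of_nonneg ht.le]
      _ = t ^ s.re * Real.exp (-(x.re * t)) := by rw [Real.rpow_sub_one ht.ne']; field_simp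
      _ ≤ t ^ s.re * Real.exp (-(ε * t)) := by gcongr; exact hball x hx
  · refine .of_forall fun t x _ => ?_
    exact (((hasDerivAt_id' x).mul_const (t : ℂ)).fun_neg.cexp.const_mul _).congr_deriv (by ring)

lemma eqOn_re_pos_of_forall_ofReal_eq {f g : ℂ → ℂ}
    (hf : DifferentiableOn ℂ f {z | 0 < z.re}) (hg : DifferentiableOn ℂ g {z | 0 < z.re})
    (hfg : ∀ r : ℝ, 0 < r → f r = g r) :
    EqOn f g {z | 0 < z.re} := by
  have hU : IsOpen {z : ℂ | 0 < z.re} := isOpen_lt continuous_const continuous_re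
  have hofReal : Tendsto ((↑) : ℝ → ℂ) (𝓝[≠] 1) (𝓝[≠] 1) :=
    tendsto_nhdsWithin_of_tendsto_nhds_of_eventually_within _
      (continuous_ofReal.tendsto' 1 1 ofReal_one |>.mono_left nhdsWithin_le_nhds)
      (eventually_nhdsWithin_of_forall fun r hr => by simpa using hr)
  refine (hf.analyticOnNhd hU).eqOn_of_preconnected_of_frequently_eq (hg.analyticOnNhd hU)
    (convex_halfSpace_re_gt 0).isPreconnected (by simp) (hofReal.frequently ?_)
  exact ((eventually_nhdsWithin_of_eventually_nhds (lt_mem_nhds one_pos)).mono hfg).frequently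

theorem mellin_cexp_neg_mul {s x : ℂ} (hs : 0 < s.re) (hx : 0 < x.re) :
    mellin (fun t : ℝ => cexp (-(x * t))) s = Gamma s * x ^ (-s) := by
  refine eqOn_re_pos_of_forall_ofReal_eq
    (f := fun x : ℂ => mellin (fun t : ℝ => cexp (-(x * t))) s)
    (fun z hz => (differentiableAt_mellin_cexp_neg_mul hs hz).differentiableWithinAt)
    (fun z hz => ((differentiableAt_id.cpow_const (.inl hz)).const_mul _).differentiableWithinAt)
    (fun r hr => mellin_cexp_neg_mul_ofReal hs hr) hx

lemma norm_Gamma_mul_cpow_neg_le {s x : ℂ} (hs : 0 < s.re) (hx : 0 < x.re) :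
    ‖Gamma s * x ^ (-s)‖ ≤ Real.Gamma s.re * x.re ^ (-s.re) := by
  rw [← mellin_cexp_neg_mul hs hx]
  calc ‖mellin (fun t : ℝ => cexp (-(x * t))) s‖
      ≤ ∫ t : ℝ in Ioi 0, t ^ (s.re - 1) * Real.exp (-(x.re * t)) :=
        (norm_integral_le_integral_norm _).trans_eq
          (setIntegral_congr_fun measurableSet_Ioi fun t ht => norm_cpow_mul_cexp_neg_mul ht)
    _ = Real.Gamma s.re * x.re ^ (-s.re) := by
        rw [Real.integral_rpow_mul_exp_neg_mul_Ioi hs hx, one_div, Real.inv_rpow hx.le,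
          Real.rpow_neg hx.le, mul_comm]

lemma Gamma_mul_cpow_neg_eq {s x : ℂ} (hs₀ : s ≠ 0) (hs₁ : s + 1 ≠ 0) (hx : x ≠ 0) :
    Gamma s * x ^ (-s) = Gamma (s + 2) * x ^ (-(s + 2)) * x ^ 2 / (s * (s + 1)) := by
  have hGamma : Gamma (s + 2) = (s + 1) * (s * Gamma s) := by
    rw [show s + 2 = s + 1 + 1 by ring, Gamma_add_one _ hs₁, Gamma_add_one _ hs₀]
  have hpow : x ^ (-(s + 2)) * x ^ 2 = x ^ (-s) := by
    rw [← cpow_ofNat, ← cpow_add _ _ hx]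
    ring_nf
  rw [hGamma, mul_assoc _ (x ^ (-(s + 2))), hpow]
  field_simp

lemma norm_le_norm_add_one {s : ℂ} (hs : 0 ≤ s.re) : ‖s‖ ≤ ‖s + 1‖ := by
  rw [norm_def, norm_def]
  gcongr
  simp only [normSq_apply, add_re, add_im, one_re, one_im]
  nlinarith

lemma norm_Gamma_mul_cpow_neg_le_div_normSq {s x : ℂ} (hs : 0 < s.re) (hx : 0 < x.re) :
    ‖Gamma s * x ^ (-s)‖ ≤
      Real.Gamma (s.re + 2) * x.re ^ (-(s.re + 2)) * ‖x‖ ^ 2 / normSq s := by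
  have hs₀ : s ≠ 0 := fun h => by simp [h] at hs
  have hs₁ : s + 1 ≠ 0 := fun h => by
    have := congrArg re h
    simp only [add_re, one_re, zero_re] at this
    linarith
  rw [Gamma_mul_cpow_neg_eq hs₀ hs₁ (fun h => by simp [h] at hx), norm_div, norm_mul (_ * _),
    norm_pow, norm_mul s, normSq_eq_norm_sq]
  have hs2 : 0 < (s + 2).re := by simp; linarith
  gcongr
  · simpa using norm_Gamma_mul_cpow_neg_le hs2 hx
  · rw [sq]; gcongr; exact norm_le_norm_add_one hs.le

lemma continuous_Gamma_mul_cpow_neg_vertical {x : ℂ} (hx : x ≠ 0) {c : ℝ} (hc : 0 < c) :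
    Continuous fun t : ℝ => Gamma (c + t * I) * x ^ (-(c + t * I)) := by
  refine .mul (continuous_iff_continuousAt.2 fun t => ?_) (.const_cpow (by fun_prop) (.inl hx))
  refine (continuousAt_Gamma _ fun m h => ?_).comp (by fun_prop)
  have := congrArg re h
  simp only [add_re, ofReal_re, mul_re, ofReal_im, I_re, I_im, neg_re, natCast_re] at this
  linarith [(m.cast_nonneg : (0 : ℝ) ≤ m)]

lemma verticalIntegrable_Gamma_mul_cpow_neg {x : ℂ} (hx : 0 < x.re) {c : ℝ} (hc : 0 < c) :
    VerticalIntegrable (fun s => Gamma s * x ^ (-s)) c := by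
  set C := Real.Gamma (c + 2) * x.re ^ (-(c + 2)) * ‖x‖ ^ 2
  have hmajor : Integrable fun t : ℝ => C / c ^ 2 * (1 + (t / c) ^ 2)⁻¹ :=
    (integrable_inv_one_add_sq.comp_div hc.ne').const_mul _
  refine hmajor.mono'
    (continuous_Gamma_mul_cpow_neg_vertical (fun h => by simp [h] at hx) hc).aestronglyMeasurable
    (.of_forall fun t => ?_)
  have hline : (c + t * I : ℂ).re = c := by simp
  calc _ ≤ C / normSq (c + t * I) := by
        have := norm_Gamma_mul_cpow_neg_le_div_normSq (hline ▸ hc) hx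
        rwa [hline] at this
    _ = C / c ^ 2 * (1 + (t / c) ^ 2)⁻¹ := by
        rw [normSq_add_mul_I]
        field_simp

end Complex

theorem mellin_inversion_exp (x : ℂ) (hx : 0 < x.re) (c : ℝ) (hc : 0 < c) :
    Complex.exp (-x) =
      (1 / (2 * Real.pi)) * ∫ t : ℝ, Complex.Gamma (c + t * I) * x ^ (-(c + t * I) : ℂ) := by
  set f : ℝ → ℂ := fun t => cexp (-(x * t))
  have hline : ∀ t : ℝ, mellin f (c + t * I) = Gamma (c + t * I) * x ^ (-(c + t * I)) :=
    fun t => mellin_cexp_neg_mul (by simpa using hc) hx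
  have hinv := mellinInv_mellin_eq c f one_pos
    (mellinConvergent_cexp_neg_mul (by simpa using hc) hx)
    (by simpa only [VerticalIntegrable, hline] using verticalIntegrable_Gamma_mul_cpow_neg hx hc)
    (by fun_prop)
  simpa [mellinInv, hline, f] using hinv.symm
end
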